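/- arXiv:1811.07959 — 2 statements merged into one kernel-verified Lean document; each statement's English description precedes it below -/
import Mathlib

section
/- A finite poset P = (X, ≤) is N-free if and only if for every subset A of X with at least two elements, the induced subposet on A is a disjoint sum or a linear sum; that is, there exists a nonempty proper subset B of A such that either no element of B is comparable to any element of A \ B, or every element of B is strictly below every element of A \ B. (Equivalently, P is N-free if and only if P belongs to the class of series-parallel posets, the smallest class containing the one-element poset and closed under linear sums and disjoint sums.) -/
/-- `(a,b,c,d)` is an `N` in the poset: the four elements are distinct, `a < b`, `c < b`,
`c < d`, and these are the only comparabilities among them. -/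
def IsN {X : Type*} [PartialOrder X] (a b c d : X) : Prop :=
  a ≠ b ∧ a ≠ c ∧ a ≠ d ∧ b ≠ c ∧ b ≠ d ∧ c ≠ d ∧
  a < b ∧ c < b ∧ c < d ∧
  (¬ a ≤ c ∧ ¬ c ≤ a) ∧ (¬ a ≤ d ∧ ¬ d ≤ a) ∧ (¬ b ≤ d ∧ ¬ d ≤ b)

/-- A poset is `N`-free if it contains no `N`. -/
def NFree (X : Type*) [PartialOrder X] : Prop :=
  ∀ a b c d : X, ¬ IsN a b c d

/-- `inc(x)`: the set of elements incomparable to `x`. -/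
def incP {X : Type*} [PartialOrder X] (x : X) : Set X :=
  {y | ¬ x ≤ y ∧ ¬ y ≤ x}

/-- The comparability graph of a poset. -/
def compGraph (X : Type*) [PartialOrder X] : SimpleGraph X where
  Adj u v := u < v ∨ v < u
  symm := by constructor; intro u v h; exact h.symm
  loopless := by constructor; intro u h; rcases h with h | h <;> exact lt_irrefl u h

/-- `A` is a module of the poset: every element outside `A` relates in the same way
to all elements of `A`. -/
def PModule {X : Type*} [PartialOrder X] (A : Set X) : Prop :=
  ∀ v ∉ A, ∀ a ∈ A, ∀ a' ∈ A, (v < a → v < a') ∧ (a < v → a' < v)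

/-- `C⁺_x`: elements above `x` comparable to all elements of `inc(x)`. -/
def Cplus {X : Type*} [PartialOrder X] (x : X) : Set X :=
  {y | x < y ∧ ∀ z ∈ incP x, (y ≤ z ∨ z ≤ y)}

/-- `C⁻_x`: elements below `x` comparable to all elements of `inc(x)`. -/
def Cminus {X : Type*} [PartialOrder X] (x : X) : Set X :=
  {y | y < x ∧ ∀ z ∈ incP x, (y ≤ z ∨ z ≤ y)}

/-- A poset is chain complete if every nonempty chain has a supremum and an infimum. -/
def ChainComplete (X : Type*) [PartialOrder X] : Prop :=
  ∀ C : Set X, C.Nonempty → IsChain (· ≤ ·) C → (∃ s, IsLUB C s) ∧ (∃ i, IsGLB C i)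

/-!
The comparability graph of an `N`-free poset has no induced path `P₄`: orienting the middle
edge of such a path forces the orientation of the other two, and either way an `N` appears.
By Seinsche's theorem a finite set of at least two vertices of a `P₄`-free graph is
disconnected in the graph or in its complement; the induction adds one vertex `v` at a time,
and the only case that is not immediate is ruled out by an induced `P₄` through `v`.

A disconnected comparability graph on `A` splits off a component: a disjoint sum. If instead
the incomparability graph on `A` is disconnected, every element outside the incomparability
component `K` of some `x` is comparable to all of `K`, hence lies above all of `K` or below
all of `K`; cutting above `K` gives a linear sum. Conversely, an `N` `a b c d` admits no such
decomposition, since both its comparability graph `a - b - c - d` and its incomparability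
graph `c - a - d - b` are connected.
-/

theorem Relation.ReflTransGen.exists_rel_of_not {α : Type*} {r : α → α → Prop}
    {p : α → Prop} {a b : α} (h : Relation.ReflTransGen r a b) (ha : p a) (hb : ¬ p b) :
    ∃ c d, Relation.ReflTransGen r a c ∧ r c d ∧ p c ∧ ¬ p d := by
  induction h with
  | refl => exact absurd ha hb
  | @tail c d hac hcd ih =>
    by_cases hc : p c
    · exact ⟨c, d, hac, hcd, hc, hb⟩
    · exact ih hc

theorem Set.eq_of_subset_of_mem_iff {α : Type*} {B : Set α} {a b c d : α}
    (hB : B ⊆ {a, b, c, d}) (hne : B.Nonempty)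
    (hb : a ∈ B ↔ b ∈ B) (hc : a ∈ B ↔ c ∈ B) (hd : a ∈ B ↔ d ∈ B) :
    B = {a, b, c, d} := by
  obtain ⟨e, he⟩ := hne
  refine hB.antisymm ?_
  simp only [Set.insert_subset_iff, Set.singleton_subset_iff]
  rcases hB he with rfl | rfl | rfl | rfl <;> tauto

namespace SimpleGraph

variable {V : Type*} (G : SimpleGraph V)

/-- Reachability by walks inside `A`; the trivial walk makes it reflexive even outside `A`. -/
def ReachIn (A : Set V) : V → V → Prop :=
  Relation.ReflTransGen fun u w => u ∈ A ∧ w ∈ A ∧ G.Adj u w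

def DisconnectedOn (A : Set V) : Prop :=
  ∃ x ∈ A, ∃ y ∈ A, ¬ G.ReachIn A x y

def InducedP4 (a b c d : V) : Prop :=
  G.Adj a b ∧ G.Adj b c ∧ G.Adj c d ∧ ¬ G.Adj a c ∧ ¬ G.Adj a d ∧ ¬ G.Adj b d

def P4Free : Prop :=
  ∀ a b c d : V, ¬ G.InducedP4 a b c d

variable {G} {A S : Set V} {v w x y z : V}

theorem ReachIn.tail (h : G.ReachIn A x y) (hy : y ∈ A) (hz : z ∈ A) (hyz : G.Adj y z) :
    G.ReachIn A x z :=
  Relation.ReflTransGen.tail h ⟨hy, hz, hyz⟩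

theorem ReachIn.trans (h : G.ReachIn A x y) (h' : G.ReachIn A y z) : G.ReachIn A x z :=
  Relation.ReflTransGen.trans h h'

theorem ReachIn.symm (h : G.ReachIn A x y) : G.ReachIn A y x :=
  Relation.ReflTransGen.mono (fun _ _ ⟨hu, hw, huw⟩ => ⟨hw, hu, huw.symm⟩)
    _ _ (Relation.reflTransGen_swap.mpr h)

theorem ReachIn.mem (h : G.ReachIn A x y) (hx : x ∈ A) : y ∈ A := by
  induction h with
  | refl => exact hx
  | tail _ e => exact e.2.1

theorem ReachIn.of_insert (hx : x ∈ S) (h : G.ReachIn (insert v S) x y) :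
    G.ReachIn S x y ∨ ∃ n, G.ReachIn S x n ∧ G.Adj n v := by
  induction h with
  | refl => exact Or.inl Relation.ReflTransGen.refl
  | @tail z y _ e ih =>
    rcases ih with hxz | hv
    · rcases e.2.1 with rfl | hy
      · exact Or.inr ⟨z, hxz, e.2.2⟩
      · exact Or.inl (hxz.tail (hxz.mem hx) hy e.2.2)
    · exact Or.inr hv

theorem disconnectedOn_of_forall_not_adj (hv : v ∈ A) (hw : w ∈ A) (hvw : v ≠ w)
    (h : ∀ u ∈ A, ¬ G.Adj v u) : G.DisconnectedOn A := by
  refine ⟨v, hv, w, hw, fun hr => ?_⟩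
  rcases Relation.ReflTransGen.cases_head hr with rfl | ⟨u, ⟨-, hu, hvu⟩, -⟩
  · exact hvw rfl
  · exact h u hu hvu

theorem InducedP4.of_compl {a b c d : V} (h : Gᶜ.InducedP4 a b c d) : G.InducedP4 c a d b := by
  simp only [InducedP4, compl_adj, not_and, not_not] at *
  grind [G.adj_comm]

theorem InducedP4.reverse {a b c d : V} (h : G.InducedP4 a b c d) : G.InducedP4 d c b a :=
  let ⟨hab, hbc, hcd, hac, had, hbd⟩ := h
  ⟨hcd.symm, hbc.symm, hab.symm, fun e => hbd e.symm, fun e => had e.symm, fun e => hac e.symm⟩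

theorem P4Free.compl (hG : G.P4Free) : Gᶜ.P4Free :=
  fun _ _ _ _ h => hG _ _ _ _ h.of_compl

theorem DisconnectedOn.exists_split (h : G.DisconnectedOn A) :
    ∃ B ⊆ A, B.Nonempty ∧ B ≠ A ∧ ∀ b ∈ B, ∀ a ∈ A \ B, ¬ G.Adj b a := by
  obtain ⟨x, hx, y, hy, hxy⟩ := h
  refine ⟨{z ∈ A | G.ReachIn A x z}, fun z hz => hz.1, ⟨x, hx, .refl⟩, fun hB => ?_, ?_⟩
  · exact hxy (hB.symm ▸ hy : y ∈ {z ∈ A | G.ReachIn A x z}).2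
  · rintro b ⟨hb, hxb⟩ a ⟨ha, hxa⟩ hba
    exact hxa ⟨ha, hxb.tail hb ha hba⟩

/-- If `insert v S` were connected, `v` would have a neighbour in every component of `S`.
Walking inside the component of `w` from a neighbour of `v` to `w` gives an edge `α β` with
`v ~ α`, `v ≁ β`; with a neighbour `c` of `v` in another component, `c v α β` is an induced
`P₄`. -/
theorem P4Free.disconnectedOn_insert (hG : G.P4Free) (hS : G.DisconnectedOn S) (hw : w ∈ S)
    (hvw : ¬ G.Adj v w) : G.DisconnectedOn (insert v S) := by
  by_contra hconn
  simp only [DisconnectedOn, not_exists, not_and, not_not] at hconn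
  have nbr : ∀ u ∈ S, ∀ u' ∈ S, ¬ G.ReachIn S u u' → ∃ n, G.ReachIn S u n ∧ G.Adj n v :=
    fun u hu u' hu' hnr => ((hconn u (.inr hu) u' (.inr hu')).of_insert hu).resolve_left hnr
  obtain ⟨c', hc', hwc'⟩ : ∃ c' ∈ S, ¬ G.ReachIn S w c' := by
    obtain ⟨p, hp, q, hq, hpq⟩ := hS
    by_cases hwp : G.ReachIn S w p
    · exact ⟨q, hq, fun hwq => hpq (hwp.symm.trans hwq)⟩
    · exact ⟨p, hp, hwp⟩
  obtain ⟨n, hwn, hnv⟩ := nbr w hw c' hc' hwc'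
  obtain ⟨c, hc'c, hcv⟩ := nbr c' hc' w hw fun h => hwc' h.symm
  have hc : c ∈ S := hc'c.mem hc'
  have far : ∀ u ∈ S, G.ReachIn S w u → ¬ G.Adj c u := fun u hu hwu hcu =>
    hwc' ((hwu.tail hu hc hcu.symm).trans hc'c.symm)
  obtain ⟨α, β, hnα, ⟨hα, hβ, hαβ⟩, hvα, hvβ⟩ :=
    Relation.ReflTransGen.exists_rel_of_not (p := G.Adj v) hwn.symm hnv.symm hvw
  have hwα : G.ReachIn S w α := hwn.trans hnα
  exact hG c v α β ⟨hcv, hvα, hαβ, far α hα hwα, far β hβ (hwα.tail hα hβ hαβ), hvβ⟩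

/-- Seinsche's theorem. -/
theorem P4Free.disconnectedOn_or_compl (hG : G.P4Free) (hA : A.Finite) (hA₂ : A.Nontrivial) :
    G.DisconnectedOn A ∨ Gᶜ.DisconnectedOn A := by
  induction A, hA using Set.Finite.induction_on with
  | empty => exact absurd hA₂ Set.not_nontrivial_empty
  | @insert v S _ _ ih =>
    obtain ⟨w, hw, hwv⟩ := hA₂.exists_ne v
    replace hw : w ∈ S := hw.resolve_left hwv
    by_cases hall : ∀ u ∈ S, G.Adj v u
    · refine Or.inr (disconnectedOn_of_forall_not_adj (.inl rfl) (.inr hw) hwv.symm ?_)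
      rintro u (rfl | hu) huv
      · exact huv.ne rfl
      · exact ((compl_adj G v u).mp huv).2 (hall u hu)
    by_cases hnone : ∀ u ∈ S, ¬ G.Adj v u
    · refine Or.inl (disconnectedOn_of_forall_not_adj (.inl rfl) (.inr hw) hwv.symm ?_)
      rintro u (rfl | hu) huv
      · exact huv.ne rfl
      · exact hnone u hu huv
    push Not at hall hnone
    obtain ⟨w₁, hw₁, hvw₁⟩ := hall
    obtain ⟨w₂, hw₂, hvw₂⟩ := hnone
    have hS : S.Nontrivial := ⟨w₁, hw₁, w₂, hw₂, fun h => hvw₁ (h ▸ hvw₂)⟩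
    rcases ih hS with h | h
    · exact Or.inl (hG.disconnectedOn_insert h hw₁ hvw₁)
    · refine Or.inr (hG.compl.disconnectedOn_insert h hw₂ fun h' => ?_)
      exact ((compl_adj G v w₂).mp h').2 hvw₂

end SimpleGraph

section Order

variable {X : Type*} [PartialOrder X] {A B : Set X} {a b c d k u w x z : X}

theorem compGraph_adj : (compGraph X).Adj u w ↔ u < w ∨ w < u := Iff.rfl

theorem compl_compGraph_adj : (compGraph X)ᶜ.Adj u w ↔ ¬ u ≤ w ∧ ¬ w ≤ u := by
  rw [SimpleGraph.compl_adj, compGraph_adj, lt_iff_le_and_ne, lt_iff_le_and_ne]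
  grind

theorem isN_of_inducedP4 (h : (compGraph X).InducedP4 a b c d) (hcb : c < b) : IsN a b c d := by
  obtain ⟨hab, -, hcd, hac, had, hbd⟩ := h
  simp only [compGraph_adj] at *
  have hab : a < b := hab.resolve_right fun hba => hac (.inr (hcb.trans hba))
  have hcd : c < d := hcd.resolve_right fun hdc => hbd (.inr (hdc.trans hcb))
  push Not at *
  unfold IsN
  refine ⟨?_, ?_, ?_, ?_, ?_, ?_, hab, hcb, hcd, ⟨?_, ?_⟩, ⟨?_, ?_⟩, ⟨?_, ?_⟩⟩ <;> order

theorem compGraph_p4Free (h : NFree X) : (compGraph X).P4Free := by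
  intro a b c d hP
  rcases hP.2.1 with hbc | hcb
  · exact h d c b a (isN_of_inducedP4 hP.reverse hbc)
  · exact h a b c d (isN_of_inducedP4 hP hcb)

theorem exists_incomparable_split (h : (compGraph X).DisconnectedOn A) :
    ∃ B ⊆ A, B.Nonempty ∧ B ≠ A ∧ ∀ b ∈ B, ∀ a ∈ A \ B, ¬ b ≤ a ∧ ¬ a ≤ b := by
  obtain ⟨B, hBA, hB, hBA', hsep⟩ := h.exists_split
  refine ⟨B, hBA, hB, hBA', fun b hb a ha => compl_compGraph_adj.mp ?_⟩
  exact (SimpleGraph.compl_adj _ _ _).mpr ⟨by rintro rfl; exact ha.2 hb, hsep b hb a ha⟩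

theorem lt_or_lt_of_not_reachIn_compl (hu : u ∈ A) (hw : w ∈ A)
    (h : ¬ (compGraph X)ᶜ.ReachIn A u w) : u < w ∨ w < u := by
  by_contra hc
  have hne : u ≠ w := by rintro rfl; exact h .refl
  exact h (.single ⟨hu, hw, (SimpleGraph.compl_adj _ _ _).mpr ⟨hne, hc⟩⟩)

theorem lt_of_reachIn_compl (hz : z ∈ A) (hxz : ¬ (compGraph X)ᶜ.ReachIn A x z) (hlt : x < z)
    (hxk : (compGraph X)ᶜ.ReachIn A x k) : k < z := by
  induction hxk with
  | refl => exact hlt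
  | @tail k k' hxk e ih =>
    obtain ⟨hk, hk', hkk'⟩ := e
    have hk'z : ¬ (compGraph X)ᶜ.ReachIn A k' z := fun h =>
      hxz ((SimpleGraph.ReachIn.tail hxk hk hk' hkk').trans h)
    rcases lt_or_lt_of_not_reachIn_compl hk' hz hk'z with h | h
    · exact h
    · exact absurd (ih.trans h).le (compl_compGraph_adj.mp hkk').1

theorem exists_lt_split (h : (compGraph X)ᶜ.DisconnectedOn A) :
    ∃ B ⊆ A, B.Nonempty ∧ B ≠ A ∧ ∀ b ∈ B, ∀ a ∈ A \ B, b < a := by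
  set H := (compGraph X)ᶜ
  obtain ⟨x, hx, y, hy, hxy, hlt⟩ : ∃ x ∈ A, ∃ y ∈ A, ¬ H.ReachIn A x y ∧ x < y := by
    obtain ⟨x, hx, y, hy, hxy⟩ := h
    rcases lt_or_lt_of_not_reachIn_compl hx hy hxy with hlt | hlt
    exacts [⟨x, hx, y, hy, hxy, hlt⟩, ⟨y, hy, x, hx, fun h => hxy h.symm, hlt⟩]
  refine ⟨{z ∈ A | H.ReachIn A x z ∨ z < x}, fun z hz => hz.1, ⟨x, hx, .inl .refl⟩,
    fun hB => ?_, ?_⟩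
  · rcases (hB.symm ▸ hy : y ∈ {z ∈ A | H.ReachIn A x z ∨ z < x}).2 with h | h
    exacts [hxy h, lt_asymm h hlt]
  · rintro b ⟨-, hxb | hbx⟩ a ⟨ha, haB⟩
    all_goals
      have hxa : ¬ H.ReachIn A x a := fun h => haB ⟨ha, .inl h⟩
      have hxa' : x < a :=
        (lt_or_lt_of_not_reachIn_compl hx ha hxa).resolve_right fun h => haB ⟨ha, .inr h⟩
    · exact lt_of_reachIn_compl ha hxa hxa' hxb
    · exact hbx.trans hxa'

theorem mem_iff_of_incomparable_split (hB : ∀ b ∈ B, ∀ a ∈ A \ B, ¬ b ≤ a ∧ ¬ a ≤ b)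
    (hu : u ∈ A) (hw : w ∈ A) (h : u ≤ w) : u ∈ B ↔ w ∈ B := by
  constructor <;> intro h' <;> by_contra h''
  · exact (hB u h' w ⟨hw, h''⟩).1 h
  · exact (hB w h' u ⟨hu, h''⟩).2 h

theorem mem_iff_of_lt_split (hB : ∀ b ∈ B, ∀ a ∈ A \ B, b < a) (hu : u ∈ A) (hw : w ∈ A)
    (h : ¬ u ≤ w) (h' : ¬ w ≤ u) : u ∈ B ↔ w ∈ B := by
  constructor <;> intro hm <;> by_contra hm'
  · exact h (hB u hm w ⟨hw, hm'⟩).le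
  · exact h' (hB w hm u ⟨hu, hm'⟩).le

theorem IsN.eq_of_split (hN : IsN a b c d) (hBA : B ⊆ {a, b, c, d}) (hB : B.Nonempty)
    (hsplit : (∀ x ∈ B, ∀ y ∈ {a, b, c, d} \ B, ¬ x ≤ y ∧ ¬ y ≤ x) ∨
      (∀ x ∈ B, ∀ y ∈ {a, b, c, d} \ B, x < y)) :
    B = {a, b, c, d} := by
  obtain ⟨-, -, -, -, -, -, hab, hcb, hcd, hac, had, hbd⟩ := hN
  rcases hsplit with h | h
  · have hab' := mem_iff_of_incomparable_split h (by simp) (by simp) hab.le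
    have hcb' := mem_iff_of_incomparable_split h (by simp) (by simp) hcb.le
    have hcd' := mem_iff_of_incomparable_split h (by simp) (by simp) hcd.le
    exact Set.eq_of_subset_of_mem_iff hBA hB hab' (hab'.trans hcb'.symm)
      ((hab'.trans hcb'.symm).trans hcd')
  · have hac' := mem_iff_of_lt_split h (by simp) (by simp) hac.1 hac.2
    have had' := mem_iff_of_lt_split h (by simp) (by simp) had.1 had.2
    have hbd' := mem_iff_of_lt_split h (by simp) (by simp) hbd.1 hbd.2
    exact Set.eq_of_subset_of_mem_iff hBA hB (had'.trans hbd'.symm) hac' had'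

end Order

theorem finite_nfree_iff_series_parallel
    {X : Type*} [Fintype X] [PartialOrder X] :
    NFree X ↔ ∀ A : Set X, A.Nontrivial →
      ∃ B : Set X, B ⊆ A ∧ B.Nonempty ∧ B ≠ A ∧
        ((∀ b ∈ B, ∀ a ∈ A \ B, ¬ b ≤ a ∧ ¬ a ≤ b) ∨
         (∀ b ∈ B, ∀ a ∈ A \ B, b < a)) := by
  constructor
  · intro hN A hA
    rcases (compGraph_p4Free hN).disconnectedOn_or_compl A.toFinite hA with h | h
    · obtain ⟨B, hBA, hB, hBA', hsplit⟩ := exists_incomparable_split h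
      exact ⟨B, hBA, hB, hBA', .inl hsplit⟩
    · obtain ⟨B, hBA, hB, hBA', hsplit⟩ := exists_lt_split h
      exact ⟨B, hBA, hB, hBA', .inr hsplit⟩
  · intro hsplit a b c d hN
    obtain ⟨B, hBA, hB, hBA', h⟩ := hsplit {a, b, c, d} ⟨a, by simp, b, by simp, hN.1⟩
    exact hBA' (hN.eq_of_split hBA hB h)
end

section
/- Let P = (X, ≤) be an N-free poset and let x ∈ X be such that C_x is nonempty. Let C'_x be the set of elements comparable to x that are incomparable to some element of inc(x). Then every element of C⁻_x is strictly below every element of C'_x ∪ inc(x) ∪ C⁺_x, and every element of C'_x ∪ inc(x) is strictly below every element of C⁺_x; in particular, P is the linear sum of C⁻_x, C'_x ∪ inc(x) ∪ {x}, and C⁺_x. -/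
section

variable {X : Type*} [PartialOrder X]

/-- `C'_x`. -/
def Cprime (x : X) : Set X :=
  {y | (y < x ∨ x < y) ∧ ∃ z ∈ incP x, ¬ y ≤ z ∧ ¬ z ≤ y}

theorem isN_of_incompRel {a b c d : X} (hab : a < b) (hcb : c < b) (hcd : c < d)
    (hac : IncompRel (· ≤ ·) a c) (had : IncompRel (· ≤ ·) a d)
    (hbd : IncompRel (· ≤ ·) b d) : IsN a b c d :=
  ⟨hab.ne, fun h => hac.1 h.le, fun h => had.1 h.le, hcb.ne', fun h => hbd.1 h.le, hcd.ne,
    hab, hcb, hcd, hac, had, hbd⟩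

theorem lt_of_mem_Cminus_of_mem_incP {x a z : X} (ha : a ∈ Cminus x) (hz : z ∈ incP x) :
    a < z := by
  rcases ha.2 z hz with h | h
  · exact h.lt_of_ne (by rintro rfl; exact hz.2 ha.1.le)
  · exact absurd (h.trans ha.1.le) hz.2

theorem lt_of_mem_incP_of_mem_Cplus {x z b : X} (hz : z ∈ incP x) (hb : b ∈ Cplus x) :
    z < b := by
  rcases hb.2 z hz with h | h
  · exact absurd (hb.1.le.trans h) hz.1
  · exact h.lt_of_ne (by rintro rfl; exact hz.1 hb.1.le)

theorem lt_of_mem_Cminus_of_mem_Cprime (hN : NFree X) {x a y : X} (ha : a ∈ Cminus x)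
    (hy : y ∈ Cprime x) : a < y := by
  obtain ⟨hyx | hxy, z, hz, hyz, hzy⟩ := hy
  · have haz := lt_of_mem_Cminus_of_mem_incP ha hz
    have hya : ¬ y ≤ a := fun h => hyz (h.trans haz.le)
    by_contra hay
    have hay' : ¬ a ≤ y := fun h => hay (h.lt_of_ne (by rintro rfl; exact hyz haz.le))
    exact hN y x a z (isN_of_incompRel hyx ha.1 haz ⟨hya, hay'⟩ ⟨hyz, hzy⟩ hz)
  · exact ha.1.trans hxy

theorem lt_of_mem_Cprime_of_mem_Cplus (hN : NFree X) {x y b : X} (hy : y ∈ Cprime x)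
    (hb : b ∈ Cplus x) : y < b := by
  obtain ⟨hyx | hxy, z, hz, hyz, hzy⟩ := hy
  · exact hyx.trans hb.1
  · have hzb := lt_of_mem_incP_of_mem_Cplus hz hb
    have hby : ¬ b ≤ y := fun h => hzy (hzb.le.trans h)
    by_contra hyb
    have hyb' : ¬ y ≤ b := fun h => hyb (h.lt_of_ne (by rintro rfl; exact hzy hzb.le))
    exact hN z b x y (isN_of_incompRel hzb hb.1 hxy hz.symm ⟨hzy, hyz⟩ ⟨hby, hyb'⟩)

theorem mem_Cminus_or_mem_Cprime_of_lt {x y : X} (hyx : y < x) :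
    y ∈ Cminus x ∨ y ∈ Cprime x := by
  by_cases hall : ∀ z ∈ incP x, y ≤ z ∨ z ≤ y
  · exact Or.inl ⟨hyx, hall⟩
  · push Not at hall
    obtain ⟨z, hz, hyz, hzy⟩ := hall
    exact Or.inr ⟨Or.inl hyx, z, hz, hyz, hzy⟩

theorem mem_Cplus_or_mem_Cprime_of_lt {x y : X} (hxy : x < y) :
    y ∈ Cplus x ∨ y ∈ Cprime x := by
  by_cases hall : ∀ z ∈ incP x, y ≤ z ∨ z ≤ y
  · exact Or.inl ⟨hxy, hall⟩
  · push Not at hall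
    obtain ⟨z, hz, hyz, hzy⟩ := hall
    exact Or.inr ⟨Or.inr hxy, z, hz, hyz, hzy⟩

theorem Cminus_union_Cprime_union_Cplus_eq_univ (x : X) :
    Set.univ = Cminus x ∪ (Cprime x ∪ incP x ∪ {x}) ∪ Cplus x := by
  refine (Set.eq_univ_of_forall fun y => ?_).symm
  simp only [Set.mem_union, Set.mem_singleton_iff]
  by_cases hyx : y ≤ x
  · rcases hyx.lt_or_eq with hlt | rfl
    · rcases mem_Cminus_or_mem_Cprime_of_lt hlt with h | h <;> tauto
    · tauto
  · by_cases hxy : x ≤ y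
    · rcases mem_Cplus_or_mem_Cprime_of_lt (hxy.lt_of_not_ge hyx) with h | h <;> tauto
    · have : y ∈ incP x := ⟨hxy, hyx⟩
      tauto

end

theorem nfree_linear_sum_decomposition_general
    {X : Type*} [PartialOrder X] (hN : NFree X)
    (x : X) :
    (∀ a ∈ Cminus x,
      ∀ b ∈ {y : X | (y < x ∨ x < y) ∧ ∃ z ∈ incP x, ¬ y ≤ z ∧ ¬ z ≤ y} ∪ incP x ∪ Cplus x,
        a < b) ∧
    (∀ a ∈ {y : X | (y < x ∨ x < y) ∧ ∃ z ∈ incP x, ¬ y ≤ z ∧ ¬ z ≤ y} ∪ incP x,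
      ∀ b ∈ Cplus x, a < b) ∧
    (∀ a ∈ Cminus x,
      ∀ b ∈ ({y : X | (y < x ∨ x < y) ∧ ∃ z ∈ incP x, ¬ y ≤ z ∧ ¬ z ≤ y} ∪ incP x ∪ {x} : Set X),
        a < b) ∧
    (∀ a ∈ ({y : X | (y < x ∨ x < y) ∧ ∃ z ∈ incP x, ¬ y ≤ z ∧ ¬ z ≤ y} ∪ incP x ∪ {x} : Set X),
      ∀ b ∈ Cplus x, a < b) ∧
    (Set.univ = Cminus x ∪
      ({y : X | (y < x ∨ x < y) ∧ ∃ z ∈ incP x, ¬ y ≤ z ∧ ¬ z ≤ y} ∪ incP x ∪ {x}) ∪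
      Cplus x) := by
  have below : ∀ a ∈ Cminus x, ∀ b ∈ Cprime x ∪ incP x ∪ {x}, a < b := by
    rintro a ha b ((hb | hb) | rfl)
    exacts [lt_of_mem_Cminus_of_mem_Cprime hN ha hb, lt_of_mem_Cminus_of_mem_incP ha hb, ha.1]
  have above : ∀ a ∈ Cprime x ∪ incP x ∪ {x}, ∀ b ∈ Cplus x, a < b := by
    rintro a ((ha | ha) | rfl) b hb
    exacts [lt_of_mem_Cprime_of_mem_Cplus hN ha hb, lt_of_mem_incP_of_mem_Cplus ha hb, hb.1]
  refine ⟨?_, fun a ha => above a (Or.inl ha), below, above,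
    Cminus_union_Cprime_union_Cplus_eq_univ x⟩
  rintro a ha b (hb | hb)
  exacts [below a ha b (Or.inl hb), ha.1.trans hb.1]

theorem nfree_linear_sum_decomposition
    {X : Type*} [PartialOrder X] (hN : NFree X)
    (x : X) (hne : (Cminus x ∪ Cplus x).Nonempty) :
    (∀ a ∈ Cminus x,
      ∀ b ∈ {y : X | (y < x ∨ x < y) ∧ ∃ z ∈ incP x, ¬ y ≤ z ∧ ¬ z ≤ y} ∪ incP x ∪ Cplus x,
        a < b) ∧
    (∀ a ∈ {y : X | (y < x ∨ x < y) ∧ ∃ z ∈ incP x, ¬ y ≤ z ∧ ¬ z ≤ y} ∪ incP x,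
      ∀ b ∈ Cplus x, a < b) ∧
    (∀ a ∈ Cminus x,
      ∀ b ∈ ({y : X | (y < x ∨ x < y) ∧ ∃ z ∈ incP x, ¬ y ≤ z ∧ ¬ z ≤ y} ∪ incP x ∪ {x} : Set X),
        a < b) ∧
    (∀ a ∈ ({y : X | (y < x ∨ x < y) ∧ ∃ z ∈ incP x, ¬ y ≤ z ∧ ¬ z ≤ y} ∪ incP x ∪ {x} : Set X),
      ∀ b ∈ Cplus x, a < b) ∧
    (Set.univ = Cminus x ∪
      ({y : X | (y < x ∨ x < y) ∧ ∃ z ∈ incP x, ¬ y ≤ z ∧ ¬ z ≤ y} ∪ incP x ∪ {x}) ∪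
      Cplus x) :=
  nfree_linear_sum_decomposition_general hN x
end
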